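/- arXiv:1908.03795 — 2 statements merged into one kernel-verified Lean document; each statement's English description precedes it below -/
import Mathlib

section
/- Let A be an n×n normal matrix with orthonormal eigenbasis v₁,…,vₙ and eigenvalues λ₁,…,λₙ. Then for each i, adj(λ_i·I_n − A) = (∏_{k≠i} (λ_i − λ_k)) · v_i v_i*, i.e., the adjugate of λ_i·I − A is a scalar multiple of the rank-one projection onto v_i. -/
/-!
The matrix `U` whose columns are the `vᵢ` is unitary and `λᵢ I - A = U diag(λᵢ - λₖ) U*`.
For unitary `U` the adjugate commutes with this conjugation, since `adj U = det U • U*`, and the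
adjugate of a diagonal matrix has `∏_{j ≠ k} (λᵢ - λⱼ)` in position `k`, which vanishes unless
`k = i`.
-/

open Matrix

namespace Matrix

theorem transpose_of_mul_diagonal_mul_conjTranspose {m n R : Type*} [Fintype m] [DecidableEq m]
    [CommSemiring R] [StarRing R] (v : m → n → R) (d : m → R) :
    (of v)ᵀ * diagonal d * (of v)ᵀᴴ = ∑ k, d k • vecMulVec (v k) (star (v k)) := by
  ext i j
  rw [mul_apply]
  simp only [mul_diagonal, conjTranspose_apply, transpose_apply, of_apply,
    Matrix.sum_apply, smul_apply, vecMulVec_apply, Pi.star_apply, smul_eq_mul]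
  exact Finset.sum_congr rfl fun k _ => by ring

variable {n R : Type*} [Fintype n] [DecidableEq n] [CommRing R]

theorem transpose_of_mem_unitaryGroup_of_dotProduct [StarRing R] {v : n → n → R}
    (hv : ∀ i k, star (v i) ⬝ᵥ v k = if i = k then 1 else 0) :
    (of v)ᵀ ∈ unitaryGroup n R := by
  refine mem_unitaryGroup_iff'.mpr (Matrix.ext fun i k => ?_)
  simpa [mul_apply, dotProduct, one_apply] using hv i k

theorem adjugate_eq_det_smul_of_mul_eq_one {A B : Matrix n n R} (h : A * B = 1) :
    adjugate A = A.det • B := by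
  calc adjugate A = adjugate A * (A * B) := by rw [h, Matrix.mul_one]
    _ = A.det • B := by rw [← Matrix.mul_assoc, adjugate_mul, Matrix.smul_mul, Matrix.one_mul]

theorem adjugate_unitary_mul_mul_star [StarRing R] {U : Matrix n n R}
    (hU : U ∈ unitaryGroup n R) (D : Matrix n n R) :
    adjugate (U * D * star U) = U * adjugate D * star U := by
  have hdet : U.det * (star U).det = 1 := by
    rw [← det_mul, mem_unitaryGroup_iff.mp hU, det_one]
  rw [adjugate_mul_distrib, adjugate_mul_distrib,
    adjugate_eq_det_smul_of_mul_eq_one (mem_unitaryGroup_iff.mp hU),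
    adjugate_eq_det_smul_of_mul_eq_one (mem_unitaryGroup_iff'.mp hU)]
  simp only [Matrix.mul_smul, Matrix.smul_mul, smul_smul, hdet, one_smul, Matrix.mul_assoc]

end Matrix

/-- The adjugate of `λᵢ I - A` is a scalar multiple of the rank one projection `vᵢ vᵢ*`. -/
theorem adjugate_eigenvalue_sub_eq_smul_proj {n : ℕ}
    (A : Matrix (Fin n) (Fin n) ℂ)
    (lam : Fin n → ℂ) (v : Fin n → Fin n → ℂ)
    (horth : ∀ i k, dotProduct (star (v i)) (v k) = if i = k then 1 else 0)
    (hdiag : A = ∑ i, lam i • Matrix.vecMulVec (v i) (star (v i)))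
    (i : Fin n) :
    (lam i • (1 : Matrix (Fin n) (Fin n) ℂ) - A).adjugate
      = (∏ k ∈ Finset.univ.erase i, (lam i - lam k)) •
        Matrix.vecMulVec (v i) (star (v i)) := by
  set U := (of v)ᵀ
  have hU : U ∈ unitaryGroup (Fin n) ℂ := transpose_of_mem_unitaryGroup_of_dotProduct horth
  have hshift : lam i • 1 - A = U * diagonal (fun k => lam i - lam k) * star U := by
    have hdiag_sub : diagonal (fun k => lam i - lam k) = lam i • 1 - diagonal lam := by
      rw [smul_one_eq_diagonal, diagonal_sub]
    rw [hdiag_sub, Matrix.mul_sub, Matrix.sub_mul, Matrix.mul_smul,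
      Matrix.smul_mul, Matrix.mul_one, mem_unitaryGroup_iff.mp hU, star_eq_conjTranspose,
      transpose_of_mul_diagonal_mul_conjTranspose, hdiag]
  rw [hshift, adjugate_unitary_mul_mul_star hU, adjugate_diagonal, star_eq_conjTranspose,
    transpose_of_mul_diagonal_mul_conjTranspose, Finset.sum_eq_single i]
  · intro k _ hki
    rw [Finset.prod_eq_zero (Finset.mem_erase.mpr ⟨Ne.symm hki, Finset.mem_univ i⟩) (sub_self _),
      zero_smul]
  · simp
end

section
/- Let A be an n×n matrix over a commutative ring, λ a scalar with a right eigenvector v (Av = λv) and a left eigenvector w (w^T A = λ w^T). Then for each j = 1,…,n: v_j w_j · p_A'(λ) = (w^T v) · p_{M_j}(λ), where M_j is the minor of A deleting row and column j. -/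
/-!
Put `B = λ • 1 - A`. Over `R[X]`, `A v = λ v` gives `(X - λ) • adj (X • 1 - A) v = p_A • v`;
differentiating at `X = λ` yields `adj B v = p_A'(λ) • v`. Since `wᵀ B = 0`, the rows of `adj B`
are proportional to `wᵀ` (`adj B j j * w k = w j * adj B j k`), so
`w j * (adj B v) j = adj B j j * (wᵀ v)`, and `adj B j j = det (λ • 1 - M_j) = p_{M_j}(λ)`.
-/

open Polynomial Matrix

namespace Polynomial

theorem eval_eq_eval_derivative_mul_of_X_sub_C_mul_eq {R : Type*} [CommRing R] {p q : R[X]}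
    {t c : R} (h : (X - C t) * q = p * C c) : q.eval t = (derivative p).eval t * c := by
  simpa using congrArg (eval t ∘ derivative) h

end Polynomial

namespace Matrix

variable {R : Type*} [CommRing R] {n : Type*} [Fintype n]

theorem eval_mulVec_map_C {m : Type*} (M : Matrix m n R[X]) (v : n → R) (t : R) (i : m) :
    eval t ((M *ᵥ fun k => C (v k)) i) = (M.map (eval t) *ᵥ v) i := by
  simp [mulVec, dotProduct, eval_finsetSum]

variable [DecidableEq n]

/- Replacing row `j` of `B` by `Pi.single i 1` gives a matrix `C` with `C v = Pi.single j (v i)`,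
whose adjugate has the same column `j` as `adj B`, and `det C = adj B i j`; now compare the
`m`-th entries of `adj C (C v) = det C • v`. -/
theorem adjugate_apply_mul_eq_mul_adjugate_apply_of_mulVec_eq_zero (B : Matrix n n R)
    {v : n → R} (hv : B *ᵥ v = 0) (i j m : n) :
    B.adjugate i j * v m = v i * B.adjugate m j := by
  set C := B.updateRow j (Pi.single i 1)
  have hCv : C *ᵥ v = Pi.single j (v i) := by
    rw [updateRow_mulVec, hv, single_dotProduct, one_mul]
    rfl
  have hadj : C.adjugate m j = B.adjugate m j := by
    rw [adjugate_apply, adjugate_apply, updateRow_idem]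
  have hdet : C.det = B.adjugate i j := (adjugate_apply B i j).symm
  have key := congrFun (congrArg (C.adjugate *ᵥ ·) hCv) m
  simp only [mulVec_mulVec, adjugate_mul, smul_mulVec, one_mulVec, mulVec_single, Pi.smul_apply,
    smul_eq_mul, col_apply, MulOpposite.smul_eq_mul_unop, MulOpposite.unop_op, hadj, hdet] at key
  linear_combination key

theorem adjugate_apply_mul_eq_mul_adjugate_apply_of_vecMul_eq_zero (B : Matrix n n R)
    {w : n → R} (hw : w ᵥ* B = 0) (i j m : n) :
    B.adjugate i j * w m = w j * B.adjugate i m := by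
  have := Bᵀ.adjugate_apply_mul_eq_mul_adjugate_apply_of_mulVec_eq_zero
    (by rwa [mulVec_transpose]) j i m
  simpa only [← adjugate_transpose, transpose_apply] using this

theorem mul_adjugate_mulVec_apply_of_vecMul_eq_zero (B : Matrix n n R)
    {w : n → R} (hw : w ᵥ* B = 0) (v : n → R) (j : n) :
    w j * (B.adjugate *ᵥ v) j = B.adjugate j j * (w ⬝ᵥ v) := by
  simp only [mulVec, dotProduct, Finset.mul_sum, ← mul_assoc,
    ← B.adjugate_apply_mul_eq_mul_adjugate_apply_of_vecMul_eq_zero hw]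

theorem adjugate_charmatrix_map_eval (A : Matrix n n R) (t : R) :
    (charmatrix A).adjugate.map (eval t) = (scalar n t - A).adjugate := by
  have hB : (charmatrix A).map (eval t) = scalar n t - A := by
    ext i j
    obtain rfl | hij := eq_or_ne i j <;> simp [*]
  rw [← hB, ← coe_evalRingHom, ← RingHom.mapMatrix_apply, RingHom.map_adjugate,
    RingHom.mapMatrix_apply]

theorem charmatrix_mulVec_of_mulVec_eq_smul (A : Matrix n n R) {t : R} {v : n → R}
    (hv : A *ᵥ v = t • v) :
    charmatrix A *ᵥ (fun i => C (v i)) = (X - C t) • fun i => C (v i) := by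
  have hAv : A.map C *ᵥ (fun i => C (v i)) = C t • fun i => C (v i) := by
    funext i
    simpa [Function.comp_def, hv] using (RingHom.map_mulVec C A v i).symm
  rw [charmatrix, sub_mulVec, scalar_apply, ← smul_one_eq_diagonal, smul_mulVec, one_mulVec,
    RingHom.mapMatrix_apply, hAv, sub_smul]

theorem eval_derivative_charpoly_smul_of_mulVec_eq_smul (A : Matrix n n R) {t : R} {v : n → R}
    (hv : A *ᵥ v = t • v) :
    (derivative A.charpoly).eval t • v = (scalar n t - A).adjugate *ᵥ v := by
  have hadj : (X - C t) • (charmatrix A).adjugate *ᵥ (fun i => C (v i))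
      = A.charpoly • fun i => C (v i) := by
    rw [← mulVec_smul, ← charmatrix_mulVec_of_mulVec_eq_smul A hv, mulVec_mulVec, adjugate_mul,
      smul_mulVec, one_mulVec, charpoly]
  funext i
  rw [Pi.smul_apply, smul_eq_mul, ← adjugate_charmatrix_map_eval, ← eval_mulVec_map_C]
  exact (eval_eq_eval_derivative_mul_of_X_sub_C_mul_eq (congrFun hadj i)).symm

theorem adjugate_scalar_sub_apply_self {k : ℕ} (A : Matrix (Fin (k + 1)) (Fin (k + 1)) R)
    (t : R) (j : Fin (k + 1)) :
    (scalar _ t - A).adjugate j j = (A.submatrix j.succAbove j.succAbove).charpoly.eval t := by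
  rw [adjugate_fin_succ_eq_det_submatrix, Even.neg_one_pow ⟨j, rfl⟩, one_mul, eval_charpoly]
  congr 1
  ext a b
  simp [diagonal_apply, Fin.succAbove_right_injective.eq_iff]

end Matrix

open Polynomial in
/-- Grinberg's generalization of the eigenvector-eigenvalue identity: no
diagonalizability assumption. -/
theorem eigenvector_eigenvalue_identity_general {R : Type*} [CommRing R] {n : ℕ}
    (A : Matrix (Fin (n+1)) (Fin (n+1)) R) (lam : R)
    (v w : Fin (n+1) → R)
    (hv : A.mulVec v = lam • v) (hw : A.vecMul w = lam • w) :
    ∀ j : Fin (n+1),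
      v j * w j * (Polynomial.derivative A.charpoly).eval lam
        = dotProduct w v *
            ((A.submatrix j.succAbove j.succAbove).charpoly.eval lam) := by
  intro j
  set B := scalar (Fin (n + 1)) lam - A
  have hBw : w ᵥ* B = 0 := by
    rw [vecMul_sub, hw, scalar_apply, vecMul_diagonal_const, op_smul_eq_smul, sub_self]
  calc v j * w j * (derivative A.charpoly).eval lam
      = w j * ((derivative A.charpoly).eval lam • v) j := by
        rw [Pi.smul_apply, smul_eq_mul]
        ring
    _ = w j * (B.adjugate *ᵥ v) j := by
        rw [eval_derivative_charpoly_smul_of_mulVec_eq_smul A hv]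
    _ = B.adjugate j j * (w ⬝ᵥ v) := B.mul_adjugate_mulVec_apply_of_vecMul_eq_zero hBw v j
    _ = (w ⬝ᵥ v) * (A.submatrix j.succAbove j.succAbove).charpoly.eval lam := by
        rw [adjugate_scalar_sub_apply_self, mul_comm]
end
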